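/- arXiv:2201.03126 — 3 statements merged into one kernel-verified Lean document; each statement's English description precedes it below -/
import Mathlib

section
/- For all real t and φ > 0 with k ≤ n, the moment generating function of the spillage distribution satisfies m(t) := ∑_{r=0}^{n-k} e^{tr} · Spillage(r | n, k, φ) = e^{t(n-k)} · ∑_{ℓ=0}^{n-k} C(n, ℓ) · (e^{-t} - 1)^ℓ · H_ℓ, where H_ℓ = φ^ℓ · S(n-ℓ, k, φ)/S(n, k, φ). -/
open Finset Filter Real

/-
The moment generating function of the spillage distribution is a ratio of noncentral Stirling
numbers: shifting `exp (t * r) = exp (t * (n - k)) * exp (-t) ^ (n - k - r)` into the weights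
turns the numerator into `exp (t * (n - k)) * S(n, k, exp (-t) * φ)`. The parameter `φ` enters
`S(n, k, φ) = ∑ⱼ C(n, j) φ^(n-j) S(j, k)` umbrally, as `L ((X + φ) ^ n)` for the linear functional
`L : Xʲ ↦ S(j, k)`, so expanding `((e^{-t} - 1) φ + (X + φ)) ^ n` binomially gives
`S(n, k, e^{-t} φ) = ∑ₗ C(n, ℓ) (e^{-t} - 1)^ℓ φ^ℓ S(n - ℓ, k, φ)`.
-/

/-- Central Stirling numbers of the second kind. -/
def stirling2 : ℕ → ℕ → ℕ
  | 0, 0 => 1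
  | 0, _ + 1 => 0
  | _ + 1, 0 => 0
  | n + 1, k + 1 => (k + 1) * stirling2 n (k + 1) + stirling2 n k

/-- Noncentral Stirling numbers of the second kind. -/
noncomputable def ncS (n k : ℕ) (φ : ℝ) : ℝ :=
  ∑ j ∈ Finset.range (n + 1), (n.choose j : ℝ) * φ ^ (n - j) * (stirling2 j k : ℝ)

/-- Spillage mass function. -/
noncomputable def spillage (r n k : ℕ) (φ : ℝ) : ℝ :=
  (n.choose (k + r) : ℝ) * φ ^ (n - k - r) * (stirling2 (k + r) k : ℝ) / ncS n k φ

section Umbral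

open Polynomial

variable {R : Type*} [CommSemiring R]

noncomputable def umbralEval (s : ℕ → R) : R[X] →ₗ[R] R :=
  lsum fun j => s j • LinearMap.id

theorem umbralEval_monomial (s : ℕ → R) (j : ℕ) (a : R) :
    umbralEval s (monomial j a) = a * s j := by
  simp [umbralEval, sum_monomial_index, mul_comm]

theorem umbralEval_X_add_C_pow (s : ℕ → R) (a : R) (n : ℕ) :
    umbralEval s ((X + C a) ^ n) = ∑ j ∈ range (n + 1), (n.choose j : R) * a ^ (n - j) * s j := by
  rw [add_pow, map_sum]
  refine sum_congr rfl fun j _ => ?_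
  rw [← C_pow, ← map_natCast C, mul_assoc, ← C_mul, ← monomial_one_right_eq_X_pow,
    monomial_mul_C, one_mul, umbralEval_monomial]
  ring

theorem umbralEval_X_add_C_add_pow (s : ℕ → R) (a b : R) (n : ℕ) :
    umbralEval s ((X + C (a + b)) ^ n) =
      ∑ ℓ ∈ range (n + 1), (n.choose ℓ : R) * a ^ ℓ * umbralEval s ((X + C b) ^ (n - ℓ)) := by
  rw [show X + C (a + b) = C a + (X + C b) by rw [C_add]; ring, add_pow, map_sum]
  refine sum_congr rfl fun ℓ _ => ?_
  rw [← C_pow, ← map_natCast C, mul_comm, ← mul_assoc, ← C_mul, ← smul_eq_C_mul, map_smul,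
    smul_eq_mul, mul_comm (n.choose ℓ : R)]

end Umbral

theorem stirling2_eq_zero_of_lt : ∀ {n k : ℕ}, n < k → stirling2 n k = 0
  | 0, _ + 1, _ => rfl
  | n + 1, k + 1, h => by
    rw [stirling2, stirling2_eq_zero_of_lt (by omega), stirling2_eq_zero_of_lt (by omega),
      mul_zero]

theorem ncS_eq_umbralEval (n k : ℕ) (φ : ℝ) :
    ncS n k φ = umbralEval (fun j => (stirling2 j k : ℝ)) ((Polynomial.X + Polynomial.C φ) ^ n) :=
  (umbralEval_X_add_C_pow _ φ n).symm

theorem ncS_eq_zero_of_lt {n k : ℕ} (h : n < k) (φ : ℝ) : ncS n k φ = 0 :=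
  sum_eq_zero fun j hj => by
    rw [stirling2_eq_zero_of_lt (by rw [mem_range] at hj; omega), Nat.cast_zero, mul_zero]

theorem ncS_eq_sum_shift (n k : ℕ) (φ : ℝ) :
    ncS n k φ = ∑ r ∈ range (n - k + 1),
      (n.choose (k + r) : ℝ) * φ ^ (n - k - r) * (stirling2 (k + r) k : ℝ) := by
  rcases lt_or_ge n k with hnk | hkn
  · simp [ncS_eq_zero_of_lt hnk, Nat.sub_eq_zero_of_le hnk.le, Nat.choose_eq_zero_of_lt hnk]
  · rw [ncS, show n + 1 = k + (n - k + 1) by omega, sum_range_add,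
      sum_eq_zero fun j hj => by rw [stirling2_eq_zero_of_lt (mem_range.1 hj)]; simp, zero_add]
    simp only [Nat.sub_sub]

/-- Only `ℓ ≤ n - k` contributes, since `S(n - ℓ, k, φ) = 0` for `n - ℓ < k`. -/
theorem ncS_add (n k : ℕ) (a φ : ℝ) :
    ncS n k (a + φ) = ∑ ℓ ∈ range (n - k + 1), (n.choose ℓ : ℝ) * a ^ ℓ * ncS (n - ℓ) k φ := by
  simp only [ncS_eq_umbralEval, umbralEval_X_add_C_add_pow]
  refine (sum_subset (range_subset_range.2 (by omega)) fun ℓ hn hk => ?_).symm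
  rw [mem_range] at hn hk
  rw [← ncS_eq_umbralEval, ncS_eq_zero_of_lt (by omega), mul_zero]

theorem sum_exp_mul_spillage (n k : ℕ) (t φ : ℝ) :
    ∑ r ∈ range (n - k + 1), exp (t * r) * spillage r n k φ =
      exp (t * (n - k : ℕ)) * ncS n k (exp (-t) * φ) / ncS n k φ := by
  simp only [spillage, ncS_eq_sum_shift n k (exp (-t) * φ), mul_sum, sum_div]
  refine sum_congr rfl fun r hr => ?_
  have hr : r ≤ n - k := Nat.lt_succ_iff.1 (mem_range.1 hr)
  have hexp : exp (t * r) = exp (t * (n - k : ℕ)) * exp (-t) ^ (n - k - r) := by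
    rw [← exp_nat_mul, ← exp_add, Nat.cast_sub hr]
    ring_nf
  rw [hexp, mul_pow]
  ring

theorem stmt6_general (n k : ℕ) (t φ : ℝ) :
    ∑ r ∈ Finset.range (n - k + 1), Real.exp (t * r) * spillage r n k φ =
      Real.exp (t * (n - k : ℕ)) *
        ∑ ℓ ∈ Finset.range (n - k + 1),
          (n.choose ℓ : ℝ) * (Real.exp (-t) - 1) ^ ℓ *
            (φ ^ ℓ * ncS (n - ℓ) k φ / ncS n k φ) := by
  rw [sum_exp_mul_spillage, show exp (-t) * φ = (exp (-t) - 1) * φ + φ by ring, ncS_add,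
    mul_div_assoc, sum_div]
  congr 1
  refine sum_congr rfl fun ℓ _ => ?_
  rw [mul_pow]
  ring

theorem stmt6 (n k : ℕ) (hk : k ≤ n) (t φ : ℝ) (hφ : 0 < φ) :
    ∑ r ∈ Finset.range (n - k + 1), Real.exp (t * r) * spillage r n k φ =
      Real.exp (t * (n - k : ℕ)) *
        ∑ ℓ ∈ Finset.range (n - k + 1),
          (n.choose ℓ : ℝ) * (Real.exp (-t) - 1) ^ ℓ *
            (φ ^ ℓ * ncS (n - ℓ) k φ / ncS n k φ) :=
  stmt6_general n k t φ
end

section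
/- For fixed k ≥ 1 and ℓ ≥ 0, the noncentral Stirling numbers satisfy the identity S(n - ℓ, k, φ) = S(n, k, φ)/(k + φ)^ℓ - ∑_{r=1}^{ℓ} (k + φ)^{r-ℓ-1} · S(n - r, k - 1, φ), whenever n ≥ ℓ and k + φ ≠ 0. -/
open Finset Filter Real

/-!
Pascal's rule for the binomial coefficients, combined with the triangular recurrence of the
central Stirling numbers, gives `S(m+1, k, φ) = (k + φ) S(m, k, φ) + S(m, k-1, φ)` for `k ≥ 1`.
Iterating this first-order linear recurrence `ℓ` times from `n - ℓ` up to `n` expresses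
`(k + φ)^ℓ S(n-ℓ, k, φ)` as `S(n, k, φ)` minus the accumulated inhomogeneous terms; dividing by
`(k + φ)^ℓ` gives the identity.
-/

theorem ncS_succ (m k : ℕ) (φ : ℝ) :
    ncS (m + 1) k φ = φ * ncS m k φ +
      ∑ j ∈ range (m + 1), (m.choose j : ℝ) * φ ^ (m - j) * (stirling2 (j + 1) k : ℝ) := by
  have pascal := sum_choose_succ_mul (fun i j => φ ^ j * (stirling2 i k : ℝ)) m
  simp only [← mul_assoc] at pascal
  rw [ncS, pascal, ncS, mul_sum]
  congr 1
  refine sum_congr rfl fun j hj => ?_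
  rw [Nat.sub_add_comm (mem_range_succ_iff.mp hj), pow_succ]
  ring

theorem ncS_succ_succ (m k : ℕ) (φ : ℝ) :
    ncS (m + 1) (k + 1) φ = ((k + 1 : ℕ) + φ) * ncS m (k + 1) φ + ncS m k φ := by
  have stirling_split : ∑ j ∈ range (m + 1),
      (m.choose j : ℝ) * φ ^ (m - j) * (stirling2 (j + 1) (k + 1) : ℝ) =
        (k + 1 : ℕ) * ncS m (k + 1) φ + ncS m k φ := by
    rw [ncS, ncS, mul_sum, ← sum_add_distrib]
    refine sum_congr rfl fun j _ => ?_
    rw [stirling2]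
    push_cast
    ring
  rw [ncS_succ, stirling_split]
  ring

theorem ncS_succ_of_pos {k : ℕ} (hk : 0 < k) (m : ℕ) (φ : ℝ) :
    ncS (m + 1) k φ = (k + φ) * ncS m k φ + ncS m (k - 1) φ := by
  obtain ⟨k, rfl⟩ := Nat.exists_eq_add_one.mpr hk
  exact ncS_succ_succ m k φ

theorem unroll_linear_recurrence {R : Type*} [CommRing R] {a b : ℕ → R} {c : R}
    (h : ∀ m, a (m + 1) = c * a m + b m) {n ℓ : ℕ} (hℓ : ℓ ≤ n) :
    c ^ ℓ * a (n - ℓ) = a n - ∑ r ∈ Icc 1 ℓ, c ^ (r - 1) * b (n - r) := by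
  induction ℓ with
  | zero => simp
  | succ ℓ ih =>
    have step : a (n - ℓ) = c * a (n - (ℓ + 1)) + b (n - (ℓ + 1)) := by
      rw [← h]; congr 1; omega
    rw [sum_Icc_succ_top (by omega), Nat.add_sub_cancel, pow_succ]
    linear_combination ih (by omega) - c ^ ℓ * step

theorem stmt9 (n k ℓ : ℕ) (hk : 1 ≤ k) (hn : ℓ ≤ n) (φ : ℝ) (hkφ : (k : ℝ) + φ ≠ 0) :
    ncS (n - ℓ) k φ =
      ncS n k φ / ((k : ℝ) + φ) ^ ℓ -
        ∑ r ∈ Finset.Icc 1 ℓ,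
          ((k : ℝ) + φ) ^ ((r : ℤ) - (ℓ : ℤ) - 1) * ncS (n - r) (k - 1) φ := by
  have unrolled := unroll_linear_recurrence (a := fun m => ncS m k φ)
    (fun m => ncS_succ_of_pos hk m φ) hn
  have hterm : ∀ r ∈ Icc 1 ℓ, ((k : ℝ) + φ) ^ ((r : ℤ) - ℓ - 1) * ncS (n - r) (k - 1) φ
      = ((k : ℝ) + φ) ^ (r - 1) * ncS (n - r) (k - 1) φ / ((k : ℝ) + φ) ^ ℓ := by
    intro r hr
    rw [show (r : ℤ) - ℓ - 1 = ((r - 1 : ℕ) : ℤ) - ℓ by grind, zpow_sub₀ hkφ, zpow_natCast,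
      zpow_natCast, mul_div_right_comm]
  rw [sum_congr rfl hterm, ← sum_div, ← sub_div, eq_div_iff (pow_ne_zero _ hkφ), ← unrolled]
  ring
end

section
/- The binomial distribution is a mixture of spillage distributions over the occupancy distribution: for 0 < θ ≤ 1, m ≥ 1, and 0 ≤ x ≤ n, Bin(x | n, θ) = ∑_{k=0}^{x} Spillage(x - k | n, k, m·(1-θ)/θ) · Occ(k | n, m, θ). -/
open Finset Filter Real

theorem mul_descFactorial_eq_descFactorial_succ_add (m k : ℕ) :
    m * m.descFactorial k = m.descFactorial (k + 1) + k * m.descFactorial k := by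
  rw [Nat.descFactorial_succ, ← add_mul]
  rcases le_or_gt k m with h | h
  · rw [Nat.sub_add_cancel h]
  · simp [Nat.descFactorial_eq_zero_iff_lt.mpr h]

theorem sum_stirling2_mul_descFactorial (x m : ℕ) :
    ∑ k ∈ range (x + 1), stirling2 x k * m.descFactorial k = m ^ x := by
  induction x with
  | zero => simp [stirling2]
  | succ x ih =>
    have shift : ∑ k ∈ range (x + 1), (k + 1) * stirling2 x (k + 1) * m.descFactorial (k + 1) =
        ∑ k ∈ range (x + 1), k * stirling2 x k * m.descFactorial k := by
      rw [sum_range_succ, stirling2_eq_zero_of_lt (Nat.lt_succ_self x), sum_range_succ']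
      simp
    calc ∑ k ∈ range (x + 2), stirling2 (x + 1) k * m.descFactorial k
        = ∑ k ∈ range (x + 1), ((k + 1) * stirling2 x (k + 1) * m.descFactorial (k + 1) +
            stirling2 x k * m.descFactorial (k + 1)) := by
          simp only [sum_range_succ' _ (x + 1), stirling2, add_mul, add_zero, zero_mul]
      _ = ∑ k ∈ range (x + 1), stirling2 x k * (m * m.descFactorial k) := by
          rw [sum_add_distrib, shift, ← sum_add_distrib]
          refine sum_congr rfl fun k _ => ?_
          rw [mul_descFactorial_eq_descFactorial_succ_add]
          ring
      _ = m ^ (x + 1) := by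
          rw [pow_succ', ← ih, mul_sum]
          exact sum_congr rfl fun k _ => by ring

theorem spillage_mul_ncS {φ : ℝ} (hφ : 0 ≤ φ) (r n k : ℕ) :
    spillage r n k φ * ncS n k φ =
      (n.choose (k + r) : ℝ) * φ ^ (n - k - r) * (stirling2 (k + r) k : ℝ) := by
  -- The numerator is one of the nonnegative summands of `ncS n k φ`, so it vanishes with it.
  refine div_mul_cancel_of_imp fun h => ?_
  rcases le_or_gt (k + r) n with hn | hn
  · have hle : (n.choose (k + r) : ℝ) * φ ^ (n - (k + r)) * (stirling2 (k + r) k : ℝ) ≤ ncS n k φ :=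
      single_le_sum (f := fun j => (n.choose j : ℝ) * φ ^ (n - j) * (stirling2 j k : ℝ))
        (fun j _ => by positivity) (mem_range.mpr (Nat.lt_succ_of_le hn))
    rw [Nat.sub_sub]
    exact le_antisymm (h ▸ hle) (by positivity)
  · simp [Nat.choose_eq_zero_of_lt hn]

theorem stmt12 (n m x : ℕ) (hm : 1 ≤ m) (hx : x ≤ n) (θ : ℝ) (hθ0 : 0 < θ) (hθ1 : θ ≤ 1) :
    (n.choose x : ℝ) * θ ^ x * (1 - θ) ^ (n - x) =
      ∑ k ∈ Finset.range (x + 1),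
        spillage (x - k) n k ((m : ℝ) * (1 - θ) / θ) *
          (θ ^ n / (m : ℝ) ^ n * (m.descFactorial k : ℝ) *
            ncS n k ((m : ℝ) * (1 - θ) / θ)) := by
  set φ : ℝ := (m : ℝ) * (1 - θ) / θ
  have hφ : 0 ≤ φ := div_nonneg (mul_nonneg m.cast_nonneg (sub_nonneg.mpr hθ1)) hθ0.le
  have hm0 : (m : ℝ) ≠ 0 := Nat.cast_ne_zero.mpr (by omega)
  have summand : ∀ k ∈ range (x + 1),
      spillage (x - k) n k φ * (θ ^ n / m ^ n * m.descFactorial k * ncS n k φ) =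
        n.choose x * φ ^ (n - x) * (θ ^ n / m ^ n) * (stirling2 x k * m.descFactorial k) := by
    intro k hk
    have hkx : k + (x - k) = x := Nat.add_sub_cancel' (Nat.lt_succ_iff.mp (mem_range.mp hk))
    have h := spillage_mul_ncS hφ (x - k) n k
    rw [hkx, Nat.sub_sub, hkx] at h
    linear_combination (θ ^ n / m ^ n * m.descFactorial k) * h
  have hsum : ∑ k ∈ range (x + 1), (stirling2 x k : ℝ) * m.descFactorial k = (m : ℝ) ^ x := by
    exact_mod_cast sum_stirling2_mul_descFactorial x m
  rw [sum_congr rfl summand, ← mul_sum, hsum]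
  obtain ⟨d, rfl⟩ := Nat.exists_eq_add_of_le hx
  rw [Nat.add_sub_cancel_left, div_pow, mul_pow]
  field_simp
  ring
end
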